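/- For a univariate random variable X with continuous distribution function F and finite first moment, E|X1 - X2| = 2 E[X (2F(X) - 1)], where X1, X2 are independent copies of X; i.e., the Gini mean difference equals twice the covariance of X with the centered rank function r(X) = 2F(X) - 1. -/

import Mathlib

/-! Since `|x - y| = x · sign (x - y) + y · sign (y - x)` and `ν ⊗ ν` is invariant under swapping
the coordinates, `E|X₁ - X₂| = 2 E[X₁ · sign (X₁ - X₂)]`. Integrating out `X₂` first,
`E[sign (x - X₂)] = P(X₂ < x) - P(X₂ > x)`, which is `2F(x) - 1` because a continuous `F`
leaves no atoms. -/

open MeasureTheory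

namespace Real

lemma measurable_sign : Measurable sign :=
  Measurable.ite measurableSet_Iio measurable_const <|
    Measurable.ite measurableSet_Ioi measurable_const measurable_const

lemma abs_eq_mul_sign (r : ℝ) : |r| = r * sign r := by
  rcases lt_trichotomy r 0 with h | rfl | h
  · rw [sign_of_neg h, abs_of_neg h]; ring
  · simp
  · rw [sign_of_pos h, abs_of_pos h, mul_one]

lemma abs_sign_le_one (r : ℝ) : |sign r| ≤ 1 := by
  rcases sign_apply_eq r with h | h | h <;> simp [h]

lemma sign_sub_eq_indicator_sub_indicator (x y : ℝ) :
    sign (x - y) = (Set.Iio x).indicator 1 y - (Set.Ioi x).indicator 1 y := by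
  simp only [sign, Set.indicator_apply, Set.mem_Iio, Set.mem_Ioi, sub_neg, sub_pos,
    Pi.one_apply]
  split_ifs <;> linarith

end Real

lemma integral_sign_sub (ν : Measure ℝ) [IsFiniteMeasure ν] (x : ℝ) :
    ∫ y, Real.sign (x - y) ∂ν = ν.real (Set.Iio x) - ν.real (Set.Ioi x) := by
  simp_rw [Real.sign_sub_eq_indicator_sub_indicator]
  rw [integral_sub ((integrable_const 1).indicator measurableSet_Iio)
    ((integrable_const 1).indicator measurableSet_Ioi)]
  simp [integral_indicator_one measurableSet_Iio, integral_indicator_one measurableSet_Ioi]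

lemma integral_sign_sub_of_nullSingletonClass (ν : Measure ℝ) [IsProbabilityMeasure ν]
    [NullSingletonClass ν] (x : ℝ) : ∫ y, Real.sign (x - y) ∂ν = 2 * ν.real (Set.Iic x) - 1 := by
  rw [integral_sign_sub, measureReal_congr Iio_ae_eq_Iic, ← Set.compl_Iic,
    probReal_compl_eq_one_sub measurableSet_Iic]
  ring

lemma nullSingletonClass_of_continuous_cdf (ν : Measure ℝ) [IsProbabilityMeasure ν]
    (h : Continuous (ProbabilityTheory.cdf ν)) : NullSingletonClass ν where
  measure_singleton a := by
    rw [← ProbabilityTheory.measure_cdf ν, StieltjesFunction.measure_singleton,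
      h.continuousWithinAt.leftLim_eq, sub_self, ENNReal.ofReal_zero]

lemma integral_abs_sub_prod_self (ν : Measure ℝ) [IsFiniteMeasure ν]
    (hint : Integrable (fun x => x) ν) :
    ∫ p : ℝ × ℝ, |p.1 - p.2| ∂(ν.prod ν) = 2 * ∫ x, x * ∫ y, Real.sign (x - y) ∂ν ∂ν := by
  set f : ℝ × ℝ → ℝ := fun p => p.1 * Real.sign (p.1 - p.2)
  have hf : Integrable f (ν.prod ν) :=
    (hint.comp_fst ν).mul_bdd
      (Real.measurable_sign.comp (measurable_fst.sub measurable_snd)).aestronglyMeasurable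
      (.of_forall fun p => Real.abs_sign_le_one _)
  have hf_swap : Integrable (f ∘ Prod.swap) (ν.prod ν) := hf.swap
  have h_split : ∀ p : ℝ × ℝ, |p.1 - p.2| = f p + (f ∘ Prod.swap) p := fun p => by
    simp only [f, Function.comp, Prod.fst_swap, Prod.snd_swap]
    rw [← neg_sub p.1 p.2, Real.sign_neg, Real.abs_eq_mul_sign]
    ring
  calc ∫ p : ℝ × ℝ, |p.1 - p.2| ∂(ν.prod ν)
      = ∫ p, f p ∂(ν.prod ν) + ∫ p, f p.swap ∂(ν.prod ν) := by
        simp_rw [h_split]; exact integral_add hf hf_swap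
    _ = 2 * ∫ p, f p ∂(ν.prod ν) := by rw [integral_prod_swap f]; ring
    _ = 2 * ∫ x, x * ∫ y, Real.sign (x - y) ∂ν ∂ν := by
        rw [integral_prod f hf]; simp only [f, integral_const_mul]

/-- For a univariate random variable with continuous distribution function `F` and finite
first moment, `E|X₁ - X₂| = 2 E[X (2F(X) - 1)]`: the Gini mean difference equals twice
the covariance of `X` with the centered rank function `r(x) = 2F(x) - 1`. -/
theorem gini_eq_two_cov_centered_rank
    (ν : Measure ℝ) [IsProbabilityMeasure ν]
    (F : ℝ → ℝ) (hF : ∀ x, F x = (ν (Set.Iic x)).toReal)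
    (hFcont : Continuous F)
    (hint : Integrable (fun x => x) ν) :
    ∫ p : ℝ × ℝ, |p.1 - p.2| ∂(ν.prod ν) =
      2 * ∫ x, x * (2 * F x - 1) ∂ν := by
  have hF_cdf : F = ProbabilityTheory.cdf ν := funext fun x => by
    rw [hF, ProbabilityTheory.cdf_eq_real, measureReal_def]
  have := nullSingletonClass_of_continuous_cdf ν (hF_cdf ▸ hFcont)
  simp_rw [integral_abs_sub_prod_self ν hint, integral_sign_sub_of_nullSingletonClass, hF,
    measureReal_def]
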